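/- Let R be a commutative ring that is an algebra over ℂ, let n ≥ 1, and let λ₁, …, λₙ be pairwise distinct nonzero complex numbers. Let A be an upper triangular n×n matrix over R whose i-th diagonal entry equals λᵢ·1_R for each i. Then there exist invertible symmetric n×n matrices P₁ and P₂ over R such that A = P₁·P₂. In particular, every such triangular matrix is a product of two invertible symmetric matrices. -/

import Mathlib

/-!
If `A` is upper triangular with distinct diagonal entries `λⱼ`, then `∏ₖ (A - λₖ)` is the
characteristic polynomial of `A` evaluated at `A`, hence zero. So for the Lagrange basis
polynomial `ℓⱼ` of the nodes `λ`, the columns of `ℓⱼ(A)` are `λⱼ`-eigenvectors, and the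
`j`-th column of `ℓⱼ(A)` has diagonal entry `ℓⱼ(λⱼ) = 1`. Collecting these columns gives an
upper unitriangular `K` with `A K = K Λ`, and then
`A = (K Kᵀ) (K⁻ᵀ Λ K⁻¹)` is a product of two invertible symmetric matrices.
-/

open Matrix Polynomial

namespace Matrix

section SymmetricFactorization

variable {ι R : Type*} [Fintype ι] [DecidableEq ι] [CommRing R]

theorem exists_isSymm_mul_of_mul_eq_mul {A K D : Matrix ι ι R} (hK : IsUnit K) (hD : IsUnit D)
    (hDs : D.IsSymm) (hAK : A * K = K * D) :
    ∃ P₁ P₂ : Matrix ι ι R, IsUnit P₁ ∧ IsUnit P₂ ∧ P₁.IsSymm ∧ P₂.IsSymm ∧ A = P₁ * P₂ := by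
  obtain ⟨u, rfl⟩ := hK
  set K : Matrix ι ι R := ↑u
  set L : Matrix ι ι R := ↑u⁻¹
  have hA : A = K * D * L := by rw [← hAK, Units.mul_inv_cancel_right]
  have hLK : Kᵀ * Lᵀ = 1 := by rw [← transpose_mul, u.inv_mul, transpose_one]
  refine ⟨K * Kᵀ, Lᵀ * D * L, u.isUnit.mul ((isUnit_transpose _).2 u.isUnit),
    (((isUnit_transpose _).2 u⁻¹.isUnit).mul hD).mul u⁻¹.isUnit, isSymm_mul_transpose_self _,
    ?_, ?_⟩
  · simp [IsSymm, transpose_mul, hDs.eq, Matrix.mul_assoc]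
  · calc A = K * (Kᵀ * Lᵀ) * D * L := by rw [hA, hLK, Matrix.mul_one]
      _ = K * Kᵀ * (Lᵀ * D * L) := by simp only [Matrix.mul_assoc]

end SymmetricFactorization

section UpperTriangular

variable {ι S R : Type*} [Fintype ι] [LinearOrder ι] [CommSemiring S] [Semiring R] [Algebra S R]

theorem IsUpperTriangular.mul_apply_self {M N : Matrix ι ι R} (hM : M.IsUpperTriangular)
    (hN : N.IsUpperTriangular) (i : ι) : (M * N) i i = M i i * N i i := by
  rw [mul_apply]
  refine Finset.sum_eq_single i (fun k _ hki => ?_) (by simp)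
  rcases hki.lt_or_gt with h | h
  · rw [hM h, zero_mul]
  · rw [hN h, mul_zero]

variable (S R) in
def upperTriangularDiagAlgHom (i : ι) : blockTriangularSubalgebra S R (id : ι → ι) →ₐ[S] R where
  toFun M := (M : Matrix ι ι R) i i
  map_one' := one_apply_eq i
  map_mul' M N := IsUpperTriangular.mul_apply_self M.2 N.2 i
  map_zero' := rfl
  map_add' _ _ := rfl
  commutes' r := by simp [algebraMap_eq_diagonal]

theorem IsUpperTriangular.aeval {A : Matrix ι ι R} (hA : A.IsUpperTriangular) (p : S[X]) :
    (Polynomial.aeval A p).IsUpperTriangular := by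
  let A' : blockTriangularSubalgebra S R id := ⟨A, hA⟩
  rw [show A = (blockTriangularSubalgebra S R id).val A' from rfl, aeval_algHom_apply]
  exact (Polynomial.aeval A' p).2

theorem IsUpperTriangular.aeval_apply_self {A : Matrix ι ι R} (hA : A.IsUpperTriangular)
    (p : S[X]) (i : ι) : Polynomial.aeval A p i i = Polynomial.aeval (A i i) p := by
  let A' : blockTriangularSubalgebra S R id := ⟨A, hA⟩
  rw [show A = (blockTriangularSubalgebra S R id).val A' from rfl, aeval_algHom_apply]
  exact (aeval_algHom_apply (upperTriangularDiagAlgHom S R i) A' p).symm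

end UpperTriangular

end Matrix

namespace Lagrange

variable {F ι B : Type*} [Field F] [DecidableEq ι] [Ring B] [Algebra F B]

theorem X_sub_C_mul_basis {s : Finset ι} {v : ι → F} {i : ι} (hi : i ∈ s) :
    (X - C (v i)) * Lagrange.basis s v i = C (nodalWeight s v i) * nodal s v := by
  rw [basis_eq_prod_sub_inv_mul_nodal_div hi, ← nodal_erase_eq_nodal_div hi,
    nodal_eq_mul_nodal_erase hi]
  ring

theorem mul_aeval_basis {s : Finset ι} {v : ι → F} {a : B} (ha : aeval a (nodal s v) = 0)
    {i : ι} (hi : i ∈ s) :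
    a * aeval a (Lagrange.basis s v i) = v i • aeval a (Lagrange.basis s v i) := by
  have h := congrArg (aeval a) (X_sub_C_mul_basis (v := v) hi)
  rw [map_mul, map_mul, ha, mul_zero, map_sub, aeval_X, aeval_C, sub_mul, sub_eq_zero] at h
  rwa [Algebra.smul_def]

end Lagrange

namespace Matrix

variable {ι F R : Type*} [Fintype ι] [LinearOrder ι] [Field F] [CommRing R] [Algebra F R]

theorem IsUpperTriangular.aeval_nodal_eq_zero {A : Matrix ι ι R} (hA : A.IsUpperTriangular)
    {lam : ι → F} (hdiag : ∀ i, A i i = algebraMap F R (lam i)) :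
    Polynomial.aeval A (Lagrange.nodal Finset.univ lam) = 0 := by
  have : (Lagrange.nodal Finset.univ lam).map (algebraMap F R) = A.charpoly := by
    simp [charpoly_of_isUpperTriangular A hA, hdiag, Lagrange.nodal, Polynomial.map_prod]
  rw [← aeval_map_algebraMap R, this, aeval_self_charpoly]

theorem IsUpperTriangular.exists_unitriangular_mul_diagonal {A : Matrix ι ι R}
    (hA : A.IsUpperTriangular) {lam : ι → F} (hlam : Function.Injective lam)
    (hdiag : ∀ i, A i i = algebraMap F R (lam i)) :
    ∃ K : Matrix ι ι R, K.IsUpperTriangular ∧ (∀ i, K i i = 1) ∧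
      A * K = K * diagonal (fun i => algebraMap F R (lam i)) := by
  refine ⟨of fun i j => Polynomial.aeval A (Lagrange.basis Finset.univ lam j) i j,
    fun i j hij => (hA.aeval _) hij, fun j => ?_, ?_⟩
  · rw [of_apply, hA.aeval_apply_self, hdiag, aeval_algebraMap_apply_eq_algebraMap_eval,
      Lagrange.eval_basis_self hlam.injOn (Finset.mem_univ j), map_one]
  · ext i j
    have hcol := congrFun (congrFun
      (Lagrange.mul_aeval_basis (hA.aeval_nodal_eq_zero hdiag) (Finset.mem_univ j)) i) j
    rw [smul_apply, Algebra.smul_def] at hcol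
    rw [mul_diagonal, of_apply, mul_comm, ← hcol]
    rfl

end Matrix

theorem stmt17_general {R : Type*} [CommRing R] [Algebra ℂ R] {n : ℕ}
    (lam : Fin n → ℂ) (hlam : Function.Injective lam) (hne : ∀ i, lam i ≠ 0)
    (A : Matrix (Fin n) (Fin n) R)
    (hAtri : ∀ i j : Fin n, j < i → A i j = 0)
    (hAdiag : ∀ i, A i i = algebraMap ℂ R (lam i)) :
    ∃ P₁ P₂ : Matrix (Fin n) (Fin n) R,
      IsUnit P₁ ∧ IsUnit P₂ ∧ P₁.IsSymm ∧ P₂.IsSymm ∧ A = P₁ * P₂ := by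
  obtain ⟨K, hKtri, hKdiag, hAK⟩ :=
    IsUpperTriangular.exists_unitriangular_mul_diagonal hAtri hlam hAdiag
  have hK : IsUnit K := by
    simp [isUnit_iff_isUnit_det, det_of_isUpperTriangular hKtri, hKdiag]
  have hD : IsUnit (diagonal fun i => algebraMap ℂ R (lam i)) :=
    isUnit_diagonal.2 (Pi.isUnit_iff.2 fun i => (hne i).isUnit.map _)
  exact exists_isSymm_mul_of_mul_eq_mul hK hD (isSymm_diagonal _) hAK

theorem stmt17 {R : Type*} [CommRing R] [Algebra ℂ R] {n : ℕ} (hn : 1 ≤ n)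
    (lam : Fin n → ℂ) (hlam : Function.Injective lam) (hne : ∀ i, lam i ≠ 0)
    (A : Matrix (Fin n) (Fin n) R)
    (hAtri : ∀ i j : Fin n, j < i → A i j = 0)
    (hAdiag : ∀ i, A i i = algebraMap ℂ R (lam i)) :
    ∃ P₁ P₂ : Matrix (Fin n) (Fin n) R,
      IsUnit P₁ ∧ IsUnit P₂ ∧ P₁.IsSymm ∧ P₂.IsSymm ∧ A = P₁ * P₂ :=
  stmt17_general lam hlam hne A hAtri hAdiag
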